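/- arXiv:1804.09211 — 2 statements merged into one kernel-verified Lean document; each statement's English description precedes it below -/
import Mathlib

section
/- Suppose μ_i ≥ 0 for all i ∈ ℤ with ∑_i μ_i = 1, |V_i| ≤ C₁, and Δt/Δx ≤ 1/C₁. Let μ_i' be the Lax–Friedrichs update and let ψ : ℝ → ℝ be Lipschitz with Lipschitz constant L. Then |∑_i ψ(x_i)(μ_i' - μ_i)| ≤ L·Δx, where x_i = i·Δx. -/
set_option maxHeartbeats 1000000

theorem stmt_3 (μ μ' V : ℤ → ℝ) (C₁ Δt Δx L : ℝ) (ψ : ℝ → ℝ)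
    (hC₁ : 0 < C₁) (hΔt : 0 < Δt) (hΔx : 0 < Δx)
    (hμpos : ∀ i, 0 ≤ μ i)
    (hsum : HasSum μ 1)
    (hV : ∀ i, |V i| ≤ C₁)
    (hCFL : Δt / Δx ≤ 1 / C₁)
    (hupd : ∀ i, μ' i = (μ (i-1) + μ (i+1)) / 2
      - (Δt / (2*Δx)) * (V (i+1) * μ (i+1) - V (i-1) * μ (i-1)))
    (hLip : ∀ x y, |ψ x - ψ y| ≤ L * |x - y|)
    (hbdd : ∃ B, ∀ x, |ψ x| ≤ B) :
    |∑' i : ℤ, ψ ((i : ℝ) * Δx) * (μ' i - μ i)| ≤ L * Δx := by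
  obtain ⟨B, hB⟩ := hbdd
  have hμsum : Summable μ := hsum.summable
  have hL0 : 0 ≤ L := by
    have h := hLip 1 0
    simp only [sub_zero, abs_one, mul_one] at h
    exact le_trans (abs_nonneg _) h
  set lam : ℝ := Δt / Δx with hlam
  have hlam0 : 0 ≤ lam := by positivity
  have hlamV : ∀ i, lam * |V i| ≤ 1 := by
    intro i
    calc lam * |V i| ≤ (1 / C₁) * C₁ :=
          mul_le_mul hCFL (hV i) (abs_nonneg _) (by positivity)
      _ = 1 := by field_simp
  set ψx : ℤ → ℝ := fun i => ψ ((i : ℝ) * Δx) with hψx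
  have hψstep : ∀ i j : ℤ, |i - j| = 1 → |ψx i - ψx j| ≤ L * Δx := by
    intro i j hij
    calc |ψx i - ψx j| ≤ L * |(i : ℝ) * Δx - (j : ℝ) * Δx| := hLip _ _
      _ = L * Δx := by
          rw [← sub_mul, abs_mul, abs_of_pos hΔx]
          have : |((i : ℝ) - (j : ℝ))| = 1 := by
            rw [← Int.cast_sub, ← Int.cast_abs, hij]; norm_num
          rw [this, one_mul]
  -- summability helper
  have key : ∀ (C : ℝ) (g : ℤ → ℝ), (∀ i, |g i| ≤ C * μ i) → Summable g := by
    intro C g hg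
    exact (Summable.of_nonneg_of_le (fun i => abs_nonneg _) hg (hμsum.mul_left C)).of_abs
  set u : ℤ → ℝ := fun j => ψx (j + 1) * (μ j * (1/2 + lam/2 * V j)) with hu
  set w : ℤ → ℝ := fun j => ψx (j - 1) * (μ j * (1/2 - lam/2 * V j)) with hw
  set z : ℤ → ℝ := fun j => ψx j * μ j with hz
  have hc : ∀ j, lam / 2 * |V j| ≤ 1/2 := fun j => by linarith [hlamV j]
  have hcp : ∀ j, 0 ≤ 1/2 + lam/2 * V j := by
    intro j
    have h1 : lam/2 * V j ≥ -(lam/2 * |V j|) := by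
      have := neg_abs_le (V j)
      nlinarith [abs_nonneg (V j)]
    linarith [hc j]
  have hcm : ∀ j, 0 ≤ 1/2 - lam/2 * V j := by
    intro j
    have h1 : lam/2 * V j ≤ lam/2 * |V j| := by
      nlinarith [le_abs_self (V j), abs_nonneg (V j)]
    linarith [hc j]
  have hcoef : ∀ j, |1/2 + lam/2 * V j| ≤ 1 ∧ |1/2 - lam/2 * V j| ≤ 1 := by
    intro j
    constructor
    · rw [abs_of_nonneg (hcp j)]
      nlinarith [hcm j]
    · rw [abs_of_nonneg (hcm j)]
      nlinarith [hcp j]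
  have hu_s : Summable u := by
    apply key B
    intro i
    rw [hu]
    simp only
    rw [abs_mul, abs_mul]
    calc |ψx (i+1)| * (|μ i| * |1/2 + lam/2 * V i|)
        ≤ B * (μ i * 1) := by
          apply mul_le_mul (hB _) ?_ (by positivity) (le_trans (abs_nonneg _) (hB 0))
          rw [abs_of_nonneg (hμpos i)]
          exact mul_le_mul_of_nonneg_left (hcoef i).1 (hμpos i)
      _ = B * μ i := by ring
  have hw_s : Summable w := by
    apply key B
    intro i
    rw [hw]
    simp only
    rw [abs_mul, abs_mul]
    calc |ψx (i-1)| * (|μ i| * |1/2 - lam/2 * V i|)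
        ≤ B * (μ i * 1) := by
          apply mul_le_mul (hB _) ?_ (by positivity) (le_trans (abs_nonneg _) (hB 0))
          rw [abs_of_nonneg (hμpos i)]
          exact mul_le_mul_of_nonneg_left (hcoef i).2 (hμpos i)
      _ = B * μ i := by ring
  have hz_s : Summable z := by
    apply key B
    intro i
    rw [hz]
    simp only [abs_mul, abs_of_nonneg (hμpos i)]
    exact mul_le_mul_of_nonneg_right (hB _) (hμpos i)
  -- the pointwise decomposition
  have hstep : ∀ i, ψx i * (μ' i - μ i) = u (i - 1) + w (i + 1) - z i := by
    intro i
    rw [hupd i]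
    simp only [hu, hw, hz]
    have h1 : i - 1 + 1 = i := by ring
    have h2 : i + 1 - 1 = i := by ring
    rw [h1, h2]
    rw [hlam]
    field_simp
    ring
  -- shifted sums
  have hus : Summable (fun i => u (i - 1)) :=
    ((Equiv.subRight (1:ℤ)).summable_iff).mpr hu_s
  have hws : Summable (fun i => w (i + 1)) :=
    ((Equiv.addRight (1:ℤ)).summable_iff).mpr hw_s
  have htsum_u : ∑' i : ℤ, u (i - 1) = ∑' i, u i := (Equiv.subRight (1:ℤ)).tsum_eq u
  have htsum_w : ∑' i : ℤ, w (i + 1) = ∑' i, w i := (Equiv.addRight (1:ℤ)).tsum_eq w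
  set a : ℤ → ℝ := fun i => ψx (i+1) * (1/2 + lam/2 * V i)
      + ψx (i-1) * (1/2 - lam/2 * V i) - ψx i with ha
  have ha_bound : ∀ i, |a i| ≤ L * Δx := by
    intro i
    have hform : a i = (1/2 + lam/2 * V i) * (ψx (i+1) - ψx i)
        + (1/2 - lam/2 * V i) * (ψx (i-1) - ψx i) := by
      rw [ha]; ring
    rw [hform]
    have d1 : |ψx (i+1) - ψx i| ≤ L * Δx := hψstep _ _ (by simp)
    have d2 : |ψx (i-1) - ψx i| ≤ L * Δx := hψstep _ _ (by simp)
    calc |(1/2 + lam/2 * V i) * (ψx (i+1) - ψx i)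
          + (1/2 - lam/2 * V i) * (ψx (i-1) - ψx i)|
        ≤ |(1/2 + lam/2 * V i) * (ψx (i+1) - ψx i)|
          + |(1/2 - lam/2 * V i) * (ψx (i-1) - ψx i)| := abs_add_le _ _
      _ = (1/2 + lam/2 * V i) * |ψx (i+1) - ψx i|
          + (1/2 - lam/2 * V i) * |ψx (i-1) - ψx i| := by
          rw [abs_mul, abs_mul, abs_of_nonneg (hcp i), abs_of_nonneg (hcm i)]
      _ ≤ (1/2 + lam/2 * V i) * (L * Δx) + (1/2 - lam/2 * V i) * (L * Δx) := by
          gcongr <;> [exact hcp i; exact hcm i]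
      _ = L * Δx := by ring
  have hμa_s : Summable (fun i => μ i * a i) := by
    apply key (L * Δx)
    intro i
    rw [abs_mul, abs_of_nonneg (hμpos i), mul_comm (L * Δx)]
    exact mul_le_mul_of_nonneg_left (ha_bound i) (hμpos i)
  have hcomb : ∀ i, u i + w i - z i = μ i * a i := by
    intro i
    simp only [hu, hw, hz, ha]
    ring
  have hmain : ∑' i : ℤ, ψx i * (μ' i - μ i) = ∑' i, μ i * a i := by
    calc ∑' i : ℤ, ψx i * (μ' i - μ i)
        = ∑' i : ℤ, (u (i - 1) + w (i + 1) - z i) := by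
          exact tsum_congr hstep
      _ = (∑' i : ℤ, (u (i-1) + w (i+1))) - ∑' i, z i := Summable.tsum_sub (hus.add hws) hz_s
      _ = ((∑' i : ℤ, u (i-1)) + ∑' i : ℤ, w (i+1)) - ∑' i, z i := by
          rw [Summable.tsum_add hus hws]
      _ = ((∑' i, u i) + ∑' i, w i) - ∑' i, z i := by rw [htsum_u, htsum_w]
      _ = ∑' i, (u i + w i - z i) := by
          rw [Summable.tsum_sub (hu_s.add hw_s) hz_s, Summable.tsum_add hu_s hw_s]
      _ = ∑' i, μ i * a i := tsum_congr hcomb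
  show |∑' i : ℤ, ψx i * (μ' i - μ i)| ≤ L * Δx
  rw [hmain]
  have habs : Summable (fun i => ‖μ i * a i‖) := by
    simpa only [Real.norm_eq_abs] using hμa_s.abs
  calc |∑' i, μ i * a i| = ‖∑' i, μ i * a i‖ := (Real.norm_eq_abs _).symm
    _ ≤ ∑' i, ‖μ i * a i‖ := norm_tsum_le_tsum_norm habs
    _ ≤ ∑' i, μ i * (L * Δx) := by
        apply Summable.tsum_le_tsum _ habs (hμsum.mul_right _)
        intro i
        rw [Real.norm_eq_abs, abs_mul, abs_of_nonneg (hμpos i)]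
        exact mul_le_mul_of_nonneg_left (ha_bound i) (hμpos i)
    _ = (∑' i, μ i) * (L * Δx) := tsum_mul_right
    _ = L * Δx := by rw [hsum.tsum_eq, one_mul]
end

section
/- Under the hypotheses of the previous context, the 1-Wasserstein distance between the discrete probability measures μⁿ = ∑_i μ_i δ_{x_i} and μⁿ⁺¹ = ∑_i μ_i' δ_{x_i} satisfies d_W(μⁿ, μⁿ⁺¹) ≤ Δx. -/
/-!
The Lax–Friedrichs step is a nearest-neighbour transport plan: the mass `μ j` at `x j` is split
into `(1/2 + λ V j) μ j`, sent to `x (j+1)`, and `(1/2 - λ V j) μ j`, sent to `x (j-1)`, where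
`λ = Δt / (2 Δx)`. The CFL condition makes both parts nonnegative. Pairing with a 1-Lipschitz `ψ`,
every unit of mass moves a distance `Δx`, so `∫ ψ d(μ' - μ) ≤ Δx ∑ μ j = Δx`.
-/

lemma summable_mul_of_abs_le {ι : Type*} {f g : ι → ℝ} (hf : Summable f) {K : ℝ}
    (hg : ∀ i, |g i| ≤ K) : Summable fun i => g i * f i :=
  (hf.abs.mul_left K).of_norm_bounded fun i => by
    rw [Real.norm_eq_abs, abs_mul]
    exact mul_le_mul_of_nonneg_right (hg i) (abs_nonneg _)

section NeighbourTransport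

variable {g a b : ℤ → ℝ} {K : ℝ}

lemma hasSum_mul_neighbourTransport (hg : ∀ i, |g i| ≤ K) (ha : Summable a) (hb : Summable b) :
    HasSum (fun i => g i * (a (i - 1) + b (i + 1) - (a i + b i)))
      (∑' j, ((g (j + 1) - g j) * a j + (g (j - 1) - g j) * b j)) := by
  have hS₁ := summable_mul_of_abs_le ha fun j => hg (j + 1)
  have hS₂ := summable_mul_of_abs_le hb fun j => hg (j - 1)
  have hS₃ := summable_mul_of_abs_le (ha.add hb) hg
  have hright : HasSum (fun i => g i * a (i - 1)) (∑' j, g (j + 1) * a j) := by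
    rw [← (Equiv.addRight (1 : ℤ)).hasSum_iff]
    simpa [Function.comp_def] using hS₁.hasSum
  have hleft : HasSum (fun i => g i * b (i + 1)) (∑' j, g (j - 1) * b j) := by
    rw [← (Equiv.subRight (1 : ℤ)).hasSum_iff]
    simpa [Function.comp_def] using hS₂.hasSum
  have hsplit : (fun i => g i * (a (i - 1) + b (i + 1) - (a i + b i)))
      = fun i => g i * a (i - 1) + g i * b (i + 1) - g i * (a i + b i) := by
    funext i
    ring
  have hregroup : ∑' j, ((g (j + 1) - g j) * a j + (g (j - 1) - g j) * b j)
      = ∑' j, g (j + 1) * a j + ∑' j, g (j - 1) * b j - ∑' j, g j * (a j + b j) := by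
    rw [← hS₁.tsum_add hS₂, ← (hS₁.add hS₂).tsum_sub hS₃]
    congr 1
    funext j
    ring
  rw [hsplit, hregroup]
  exact (hright.add hleft).sub hS₃.hasSum

lemma tsum_mul_neighbourTransport_le (hg : ∀ i, |g i| ≤ K) {c : ℝ}
    (hgc : ∀ i, |g (i + 1) - g i| ≤ c) (ha : Summable a) (hb : Summable b)
    (ha0 : ∀ i, 0 ≤ a i) (hb0 : ∀ i, 0 ≤ b i) :
    ∑' i, g i * (a (i - 1) + b (i + 1) - (a i + b i)) ≤ c * ∑' i, (a i + b i) := by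
  have hgc' : ∀ j, |g (j - 1) - g j| ≤ c := fun j => by
    simpa [abs_sub_comm] using hgc (j - 1)
  have hstep : ∀ j, (g (j + 1) - g j) * a j + (g (j - 1) - g j) * b j ≤ c * (a j + b j) := by
    intro j
    have hr := mul_le_mul_of_nonneg_right ((le_abs_self _).trans (hgc j)) (ha0 j)
    have hl := mul_le_mul_of_nonneg_right ((le_abs_self _).trans (hgc' j)) (hb0 j)
    linarith
  rw [(hasSum_mul_neighbourTransport hg ha hb).tsum_eq, ← tsum_mul_left]
  exact ((summable_mul_of_abs_le ha hgc).add (summable_mul_of_abs_le hb hgc')).tsum_le_tsum hstep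
    ((ha.add hb).mul_left c)

end NeighbourTransport

lemma abs_mul_le_half_of_cfl {C₁ Δt Δx v : ℝ} (hΔt : 0 < Δt) (hΔx : 0 < Δx) (hv : |v| ≤ C₁)
    (hCFL : Δt / Δx ≤ 1 / C₁) : |Δt / (2 * Δx) * v| ≤ 1 / 2 := by
  have hC₁ : 0 ≤ C₁ := (abs_nonneg v).trans hv
  have hratio : Δt / Δx * C₁ ≤ 1 := by
    rcases hC₁.eq_or_lt with rfl | hpos
    · simp
    · calc Δt / Δx * C₁ ≤ 1 / C₁ * C₁ := mul_le_mul_of_nonneg_right hCFL hC₁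
        _ = 1 := one_div_mul_cancel hpos.ne'
  calc |Δt / (2 * Δx) * v| = Δt / Δx * |v| / 2 := by
        rw [abs_mul, abs_of_pos (by positivity)]; ring
    _ ≤ Δt / Δx * C₁ / 2 := by gcongr
    _ ≤ 1 / 2 := by linarith

theorem stmt_4_general (μ μ' V : ℤ → ℝ) (C₁ Δt Δx : ℝ)
    (hΔt : 0 < Δt) (hΔx : 0 < Δx)
    (hμpos : ∀ i, 0 ≤ μ i)
    (hsum : HasSum μ 1)
    (hV : ∀ i, |V i| ≤ C₁)
    (hCFL : Δt / Δx ≤ 1 / C₁)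
    (hupd : ∀ i, μ' i = (μ (i-1) + μ (i+1)) / 2
      - (Δt / (2*Δx)) * (V (i+1) * μ (i+1) - V (i-1) * μ (i-1))) :
    sSup {r : ℝ | ∃ ψ : ℝ → ℝ,
      (∀ x y, |ψ x - ψ y| ≤ |x - y|) ∧ (∃ B, ∀ x, |ψ x| ≤ B) ∧
      r = ∑' i : ℤ, ψ ((i : ℝ) * Δx) * (μ' i - μ i)} ≤ Δx := by
  refine Real.sSup_le ?_ hΔx.le
  rintro r ⟨ψ, hψ, ⟨B, hB⟩, rfl⟩
  set l := Δt / (2 * Δx)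
  have hlV : ∀ j, |l * V j| ≤ 1 / 2 := fun j => abs_mul_le_half_of_cfl hΔt hΔx (hV j) hCFL
  set a : ℤ → ℝ := fun j => (1 / 2 + l * V j) * μ j
  set b : ℤ → ℝ := fun j => (1 / 2 - l * V j) * μ j
  have hab : ∀ j, a j + b j = μ j := fun j => by ring
  have ha0 : ∀ j, 0 ≤ a j := fun j => mul_nonneg (by linarith [(abs_le.1 (hlV j)).1]) (hμpos j)
  have hb0 : ∀ j, 0 ≤ b j := fun j => mul_nonneg (by linarith [(abs_le.1 (hlV j)).2]) (hμpos j)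
  have ha : Summable a :=
    hsum.summable.of_nonneg_of_le ha0 fun j => by linarith [hab j, hb0 j]
  have hb : Summable b :=
    hsum.summable.of_nonneg_of_le hb0 fun j => by linarith [hab j, ha0 j]
  have hgrid : ∀ i : ℤ, |ψ (((i + 1 : ℤ) : ℝ) * Δx) - ψ ((i : ℝ) * Δx)| ≤ Δx := fun i => by
    simpa [add_mul, abs_of_pos hΔx] using hψ (((i + 1 : ℤ) : ℝ) * Δx) ((i : ℝ) * Δx)
  calc ∑' i : ℤ, ψ ((i : ℝ) * Δx) * (μ' i - μ i)
      = ∑' i : ℤ, ψ ((i : ℝ) * Δx) * (a (i - 1) + b (i + 1) - (a i + b i)) := by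
        congr 1; funext i; rw [hupd i]; ring
    _ ≤ Δx * ∑' i, (a i + b i) :=
        tsum_mul_neighbourTransport_le (g := fun i : ℤ => ψ (i * Δx)) (fun i => hB _) hgrid
          ha hb ha0 hb0
    _ = Δx := by simp only [hab, hsum.tsum_eq, mul_one]

theorem stmt_4 (μ μ' V : ℤ → ℝ) (C₁ Δt Δx : ℝ)
    (hC₁ : 0 < C₁) (hΔt : 0 < Δt) (hΔx : 0 < Δx)
    (hμpos : ∀ i, 0 ≤ μ i)
    (hsum : HasSum μ 1)
    (hV : ∀ i, |V i| ≤ C₁)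
    (hCFL : Δt / Δx ≤ 1 / C₁)
    (hupd : ∀ i, μ' i = (μ (i-1) + μ (i+1)) / 2
      - (Δt / (2*Δx)) * (V (i+1) * μ (i+1) - V (i-1) * μ (i-1))) :
    sSup {r : ℝ | ∃ ψ : ℝ → ℝ,
      (∀ x y, |ψ x - ψ y| ≤ |x - y|) ∧ (∃ B, ∀ x, |ψ x| ≤ B) ∧
      r = ∑' i : ℤ, ψ ((i : ℝ) * Δx) * (μ' i - μ i)} ≤ Δx :=
  stmt_4_general μ μ' V C₁ Δt Δx hΔt hΔx hμpos hsum hV hCFL hupd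
end
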